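/- arXiv:1805.05851 — 4 statements merged into one kernel-verified Lean document; each statement's English description precedes it below -/
import Mathlib

section
/- Let a, b ≥ 0 and let f : ℝ³ → ℝ satisfy the local Lipschitz condition |f(y,z,u) − f(ỹ,z̃,ũ)| ≤ a·|y − ỹ| + ρ(max(|z|,|z̃|,|u|,|ũ|))·b·(|z − z̃| + |u − ũ|) for all (y,z,u), (ỹ,z̃,ũ) ∈ ℝ³. Let R, Q, P > 0, let b_R, b_Q, b_P, b_{2R} be truncations at the respective levels, and set Ĝ(𝐮) := b_P( ∫ g(b_{2R}(𝐮(x))) κ(x) ν(dx) ). Then for all y, y', z, z' ∈ ℝ and all 𝐮, 𝐮' ∈ L²(ν): |f(b_R(y), b_Q(z), Ĝ(𝐮)) − f(b_R(y'), b_Q(z'), Ĝ(𝐮'))| ≤ a·|y − y'| + ρ(max(Q,P))·(1 + ρ(2R)·‖κ‖)·b·(|z − z'| + ‖𝐮 − 𝐮'‖). -/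
/-!
The truncations keep the last two arguments of `f` in `[-Q, Q] × [-P, P]`, where the local
Lipschitz condition holds with the single constant `ρ (max Q P)`. The nonlocal argument is
Lipschitz on `L²(ν)`: since `b_{2R}` takes values in `[-2R, 2R]`, the mean value theorem makes
`g ∘ b_{2R}` globally `ρ(2R)`-Lipschitz, and Cauchy–Schwarz against `κ` turns this into
`|∫ g(b_{2R} 𝐮) κ dν - ∫ g(b_{2R} 𝐮') κ dν| ≤ ρ(2R) ‖𝐮 - 𝐮'‖ ‖κ‖`;
finally `b_P` is 1-Lipschitz.
-/

open MeasureTheory Set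

section

variable {α : Type*} [MeasurableSpace α] {μ : Measure α}

lemma abs_integral_mul_le_eLpNorm_mul_eLpNorm {v w : α → ℝ} (hv : MemLp v 2 μ)
    (hw : MemLp w 2 μ) :
    |∫ x, v x * w x ∂μ| ≤ (eLpNorm v 2 μ).toReal * (eLpNorm w 2 μ).toReal := by
  have hinner : ∫ x, v x * w x ∂μ = inner ℝ (hv.toLp v) (hw.toLp w) := by
    rw [L2.inner_def]
    refine integral_congr_ae ?_
    filter_upwards [hv.coeFn_toLp, hw.coeFn_toLp] with x hvx hwx
    simp [hvx, hwx, mul_comm]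
  simpa only [hinner, Lp.norm_toLp] using abs_real_inner_le_norm (hv.toLp v) (hw.toLp w)

lemma abs_integral_comp_mul_sub_le {φ : ℝ → ℝ} {L : NNReal} (hφ : LipschitzWith L φ)
    (hφ0 : φ 0 = 0) {κ u u' : α → ℝ} (hκ : MemLp κ 2 μ) (hu : MemLp u 2 μ)
    (hu' : MemLp u' 2 μ) :
    |∫ x, φ (u x) * κ x ∂μ - ∫ x, φ (u' x) * κ x ∂μ| ≤
      L * (eLpNorm (fun x => u x - u' x) 2 μ).toReal * (eLpNorm κ 2 μ).toReal := by
  have hφu : MemLp (fun x => φ (u x)) 2 μ := hφ.comp_memLp hφ0 hu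
  have hφu' : MemLp (fun x => φ (u' x)) 2 μ := hφ.comp_memLp hφ0 hu'
  have hdiff : eLpNorm (fun x => φ (u x) - φ (u' x)) 2 μ ≤
      ENNReal.ofReal L * eLpNorm (fun x => u x - u' x) 2 μ :=
    eLpNorm_le_mul_eLpNorm_of_ae_le_mul
      (.of_forall fun x => hφ.norm_sub_le (u x) (u' x)) 2
  rw [← integral_sub (by exact hφu.integrable_mul hκ) (by exact hφu'.integrable_mul hκ)]
  simp only [← sub_mul]
  calc |∫ x, (φ (u x) - φ (u' x)) * κ x ∂μ|
      ≤ (eLpNorm (fun x => φ (u x) - φ (u' x)) 2 μ).toReal * (eLpNorm κ 2 μ).toReal :=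
        abs_integral_mul_le_eLpNorm_mul_eLpNorm (hφu.sub hφu') hκ
    _ ≤ L * (eLpNorm (fun x => u x - u' x) 2 μ).toReal * (eLpNorm κ 2 μ).toReal := by
        gcongr
        have := ENNReal.toReal_mono
          (ENNReal.mul_ne_top ENNReal.ofReal_ne_top (hu.sub hu').eLpNorm_ne_top) hdiff
        rwa [ENNReal.toReal_mul, ENNReal.toReal_ofReal L.coe_nonneg] at this

end

lemma lipschitzOnWith_Icc_of_abs_deriv_le {g ρ : ℝ → ℝ} (hg : Differentiable ℝ g)
    (hg' : ∀ v, |deriv g v| ≤ ρ |v|) (hρ : MonotoneOn ρ (Ici 0)) (r : ℝ) :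
    LipschitzOnWith (ρ r).toNNReal g (Icc (-r) r) := by
  refine (convex_Icc (-r) r).lipschitzOnWith_of_nnnorm_deriv_le (fun x _ => hg x) fun x hx => ?_
  have hxr : |x| ≤ r := abs_le.mpr hx
  rw [← NNReal.coe_le_coe, coe_nnnorm, Real.norm_eq_abs]
  calc |deriv g x| ≤ ρ |x| := hg' x
    _ ≤ ρ r := hρ (abs_nonneg x) ((abs_nonneg x).trans hxr) hxr
    _ ≤ (ρ r).toNNReal := Real.le_coe_toNNReal _

lemma lipschitzWith_comp_of_abs_deriv_le {g ρ t : ℝ → ℝ} (hg : Differentiable ℝ g)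
    (hg' : ∀ v, |deriv g v| ≤ ρ |v|) (hρ : MonotoneOn ρ (Ici 0)) {r : ℝ}
    (ht_bd : ∀ x, |t x| ≤ r) (ht_lip : LipschitzWith 1 t) :
    LipschitzWith (ρ r).toNNReal (g ∘ t) := by
  simpa using lipschitzOnWith_univ.mp
    ((lipschitzOnWith_Icc_of_abs_deriv_le hg hg' hρ r).comp ht_lip.lipschitzOnWith
      fun x _ => abs_le.mp (ht_bd x))

lemma lipschitzWith_one_of_abs_sub_le {t : ℝ → ℝ} (ht : ∀ x y, |t x - t y| ≤ |x - y|) :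
    LipschitzWith 1 t :=
  .of_dist_le_mul fun x y => by simpa [Real.dist_eq] using ht x y

lemma abs_sub_le_of_abs_le_of_local_lipschitz {f : ℝ → ℝ → ℝ → ℝ} {ρ : ℝ → ℝ}
    {a b : ℝ}
    (hf : ∀ y z u y' z' u' : ℝ, |f y z u - f y' z' u'| ≤
      a * |y - y'| + ρ (max (max |z| |z'|) (max |u| |u'|)) * b * (|z - z'| + |u - u'|))
    (hρ : MonotoneOn ρ (Ici 0)) (hb : 0 ≤ b) {Q P y y' z z' u u' : ℝ}
    (hz : |z| ≤ Q) (hz' : |z'| ≤ Q) (hu : |u| ≤ P) (hu' : |u'| ≤ P) :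
    |f y z u - f y' z' u'| ≤ a * |y - y'| + ρ (max Q P) * b * (|z - z'| + |u - u'|) := by
  have hm0 : 0 ≤ max (max |z| |z'|) (max |u| |u'|) :=
    le_max_of_le_left (le_max_of_le_left (abs_nonneg z))
  have hmQP : max (max |z| |z'|) (max |u| |u'|) ≤ max Q P :=
    max_le_max (max_le hz hz') (max_le hu hu')
  grw [hf, hρ hm0 (hm0.trans hmQP) hmQP]

theorem truncated_generator_lipschitz_general
    (ν : Measure ℝ)
    (ρ : ℝ → ℝ) (hρ_nonneg : ∀ x : ℝ, 0 ≤ x → 0 ≤ ρ x)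
    (hρ_mono : MonotoneOn ρ (Set.Ici (0 : ℝ)))
    (g : ℝ → ℝ) (hg : Differentiable ℝ g) (hg0 : g 0 = 0)
    (hg' : ∀ v : ℝ, |deriv g v| ≤ ρ |v|)
    (hκ : MemLp (fun x : ℝ => min 1 |x|) 2 ν)
    (a b : ℝ) (ha : 0 ≤ a) (hb : 0 ≤ b)
    (f : ℝ → ℝ → ℝ → ℝ)
    (hf : ∀ y z u y' z' u' : ℝ,
      |f y z u - f y' z' u'| ≤
        a * |y - y'| +
          ρ (max (max |z| |z'|) (max |u| |u'|)) * b * (|z - z'| + |u - u'|))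
    (R Q P : ℝ) (hR : 0 < R) (hQ : 0 < Q)
    (bR bQ bP b2R : ℝ → ℝ)
    (hbR_lip : ∀ x y : ℝ, |bR x - bR y| ≤ |x - y|)
    (hbQ_bd : ∀ x : ℝ, |bQ x| ≤ min Q |x|)
    (hbQ_lip : ∀ x y : ℝ, |bQ x - bQ y| ≤ |x - y|)
    (hbP_bd : ∀ x : ℝ, |bP x| ≤ min P |x|)
    (hbP_lip : ∀ x y : ℝ, |bP x - bP y| ≤ |x - y|)
    (hb2R0 : b2R 0 = 0) (hb2R_bd : ∀ x : ℝ, |b2R x| ≤ min (2 * R) |x|)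
    (hb2R_lip : ∀ x y : ℝ, |b2R x - b2R y| ≤ |x - y|) :
    ∀ (y y' z z' : ℝ) (u u' : ℝ → ℝ), MemLp u 2 ν → MemLp u' 2 ν →
      |f (bR y) (bQ z) (bP (∫ x, g (b2R (u x)) * min 1 |x| ∂ν)) -
          f (bR y') (bQ z') (bP (∫ x, g (b2R (u' x)) * min 1 |x| ∂ν))| ≤
        a * |y - y'| +
          ρ (max Q P) * (1 + ρ (2 * R) * (eLpNorm (fun x : ℝ => min 1 |x|) 2 ν).toReal) *
            b * (|z - z'| + (eLpNorm (fun x => u x - u' x) 2 ν).toReal) := by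
  intro y y' z z' u u' hu hu'
  have hρM : 0 ≤ ρ (max Q P) := hρ_nonneg _ (le_max_of_le_left hQ.le)
  have hρ2R : 0 ≤ ρ (2 * R) := hρ_nonneg _ (by positivity)
  have hφ := lipschitzWith_comp_of_abs_deriv_le hg hg' hρ_mono
    (fun x => (hb2R_bd x).trans (min_le_left _ _)) (lipschitzWith_one_of_abs_sub_le hb2R_lip)
  have hG := abs_integral_comp_mul_sub_le hφ (by simp [hb2R0, hg0]) hκ hu hu'
  simp only [Real.coe_toNNReal _ hρ2R, Function.comp_apply] at hG
  grw [abs_sub_le_of_abs_le_of_local_lipschitz hf hρ_mono hb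
      ((hbQ_bd z).trans (min_le_left _ _)) ((hbQ_bd z').trans (min_le_left _ _))
      ((hbP_bd _).trans (min_le_left _ _)) ((hbP_bd _).trans (min_le_left _ _)),
    hbR_lip, hbQ_lip, hbP_lip, hG]
  set K := (eLpNorm (fun x : ℝ => min 1 |x|) 2 ν).toReal
  set D := (eLpNorm (fun x => u x - u' x) 2 ν).toReal
  have hK : 0 ≤ K := ENNReal.toReal_nonneg
  have hD : 0 ≤ D := ENNReal.toReal_nonneg
  have hsplit : |z - z'| + ρ (2 * R) * D * K ≤ (1 + ρ (2 * R) * K) * (|z - z'| + D) := by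
    nlinarith [mul_nonneg (mul_nonneg hρ2R hK) (abs_nonneg (z - z'))]
  calc _ ≤ a * |y - y'| + ρ (max Q P) * b * ((1 + ρ (2 * R) * K) * (|z - z'| + D)) := by gcongr
    _ = _ := by ring

/-- The truncated generator `(y,z,𝐮) ↦ f(b_R y, b_Q z, Ĝ(𝐮))` is globally Lipschitz:
inequality (9) in the proof of Theorem 3.2. -/
theorem truncated_generator_lipschitz
    (ν : Measure ℝ) (hν0 : ν {0} = 0)
    (ρ : ℝ → ℝ) (hρ_nonneg : ∀ x : ℝ, 0 ≤ x → 0 ≤ ρ x)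
    (hρ_mono : MonotoneOn ρ (Set.Ici (0 : ℝ))) (hρ_cont : ContinuousOn ρ (Set.Ici (0 : ℝ)))
    (g : ℝ → ℝ) (hg : Differentiable ℝ g) (hg0 : g 0 = 0)
    (hg' : ∀ v : ℝ, |deriv g v| ≤ ρ |v|)
    (hκ : MemLp (fun x : ℝ => min 1 |x|) 2 ν)
    (a b : ℝ) (ha : 0 ≤ a) (hb : 0 ≤ b)
    (f : ℝ → ℝ → ℝ → ℝ)
    (hf : ∀ y z u y' z' u' : ℝ,
      |f y z u - f y' z' u'| ≤
        a * |y - y'| +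
          ρ (max (max |z| |z'|) (max |u| |u'|)) * b * (|z - z'| + |u - u'|))
    (R Q P : ℝ) (hR : 0 < R) (hQ : 0 < Q) (hP : 0 < P)
    (bR bQ bP b2R : ℝ → ℝ)
    (hbR0 : bR 0 = 0) (hbR_bd : ∀ x : ℝ, |bR x| ≤ min R |x|)
    (hbR_lip : ∀ x y : ℝ, |bR x - bR y| ≤ |x - y|)
    (hbQ0 : bQ 0 = 0) (hbQ_bd : ∀ x : ℝ, |bQ x| ≤ min Q |x|)
    (hbQ_lip : ∀ x y : ℝ, |bQ x - bQ y| ≤ |x - y|)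
    (hbP0 : bP 0 = 0) (hbP_bd : ∀ x : ℝ, |bP x| ≤ min P |x|)
    (hbP_lip : ∀ x y : ℝ, |bP x - bP y| ≤ |x - y|)
    (hb2R0 : b2R 0 = 0) (hb2R_bd : ∀ x : ℝ, |b2R x| ≤ min (2 * R) |x|)
    (hb2R_lip : ∀ x y : ℝ, |b2R x - b2R y| ≤ |x - y|) :
    ∀ (y y' z z' : ℝ) (u u' : ℝ → ℝ), MemLp u 2 ν → MemLp u' 2 ν →
      |f (bR y) (bQ z) (bP (∫ x, g (b2R (u x)) * min 1 |x| ∂ν)) -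
          f (bR y') (bQ z') (bP (∫ x, g (b2R (u' x)) * min 1 |x| ∂ν))| ≤
        a * |y - y'| +
          ρ (max Q P) * (1 + ρ (2 * R) * (eLpNorm (fun x : ℝ => min 1 |x|) 2 ν).toReal) *
            b * (|z - z'| + (eLpNorm (fun x => u x - u' x) 2 ν).toReal) :=
  truncated_generator_lipschitz_general ν ρ hρ_nonneg hρ_mono g hg hg0 hg' hκ a b ha hb f hf R Q P
    hR hQ bR bQ bP b2R hbR_lip hbQ_bd hbQ_lip hbP_bd hbP_lip hb2R0 hb2R_bd hb2R_lip
end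

section
/- Let T > 0, let a, k : [0,T] → [0,∞) be Lebesgue integrable, and let A ≥ 0. Define ȳ(t) := A·exp(∫_t^T a(s) ds) + ∫_t^T k(s)·exp(∫_t^s a(r) dr) ds for t ∈ [0,T]. Then ȳ is continuous and nonnegative on [0,T], ȳ(T) = A, ȳ is nonincreasing (so ȳ(t) ≤ ȳ(0) = A·exp(∫_0^T a(s) ds) + ∫_0^T k(s)·exp(∫_0^s a(r) dr) ds for all t), and ȳ satisfies the backward integral equation ȳ(t) = A + ∫_t^T ( k(s) + a(s)·|ȳ(s)| ) ds for every t ∈ [0,T]. -/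
/-!
With `F t = ∫ r in 0..t, a r`, the formula for `ȳ` is the variation-of-constants expression
`ȳ t = exp (-F t) * (A * exp (F T) + ∫ s in t..T, k s * exp (F s))`. The primitive `F` is
absolutely continuous, hence so is `ȳ`, and by Lebesgue's differentiation theorem
`ȳ' = -(k + a ȳ)` almost everywhere; the fundamental theorem of calculus for absolutely
continuous functions then yields the integral equation. As `ȳ ≥ 0`, the integrand
`k + a |ȳ|` is nonnegative, so the equation also shows that `ȳ` is nonincreasing.
-/

open MeasureTheory intervalIntegral Set Filter Real
open scoped NNReal

theorem LipschitzOnWith.comp_absolutelyContinuousOnInterval {X Y : Type*} [PseudoMetricSpace X]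
    [PseudoMetricSpace Y] {f : ℝ → X} {g : X → Y} {K : ℝ≥0} {s : Set X} {a b : ℝ}
    (hg : LipschitzOnWith K g s) (hf : AbsolutelyContinuousOnInterval f a b)
    (hfs : MapsTo f (uIcc a b) s) : AbsolutelyContinuousOnInterval (g ∘ f) a b := by
  unfold AbsolutelyContinuousOnInterval at hf ⊢
  refine squeeze_zero' ?_ ?_ (by simpa using hf.const_mul (K : ℝ))
  · exact Eventually.of_forall fun _ => Finset.sum_nonneg fun _ _ => dist_nonneg
  rw [eventually_inf_principal]
  filter_upwards with ⟨n, I⟩ hnI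
  rw [Finset.mul_sum]
  gcongr with i hi
  exact hg.dist_le_mul _ (hfs (hnI.1 i hi).1) _ (hfs (hnI.1 i hi).2)

theorem AbsolutelyContinuousOnInterval.rexp {f : ℝ → ℝ} {a b : ℝ}
    (hf : AbsolutelyContinuousOnInterval f a b) :
    AbsolutelyContinuousOnInterval (fun x => exp (f x)) a b := by
  obtain ⟨K, hK⟩ := Real.contDiff_exp.locallyLipschitz.locallyLipschitzOn
    |>.exists_lipschitzOnWith_of_compact (isCompact_uIcc.image_of_continuousOn hf.continuousOn)
  exact hK.comp_absolutelyContinuousOnInterval hf (mapsTo_image f _)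

theorem antitoneOn_of_eq_add_integral {y h : ℝ → ℝ} {A b c : ℝ}
    (hh : IntervalIntegrable h volume b c) (hh_nonneg : ∀ s ∈ Icc b c, 0 ≤ h s)
    (hy : ∀ t ∈ Icc b c, y t = A + ∫ s in t..c, h s) : AntitoneOn y (Icc b c) := by
  intro p hp q hq hpq
  have hint : ∀ t ∈ Icc b c, ∀ u ∈ Icc b c, IntervalIntegrable h volume t u :=
    fun t ht u hu => hh.mono_set (uIcc_subset_uIcc (Icc_subset_uIcc ht) (Icc_subset_uIcc hu))
  have hpq_nonneg : 0 ≤ ∫ s in p..q, h s :=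
    integral_nonneg hpq fun s hs => hh_nonneg s ⟨hp.1.trans hs.1, hs.2.trans hq.2⟩
  rw [hy p hp, hy q hq, ← integral_add_adjacent_intervals (hint p hp q hq)
    (hint q hq c (right_mem_Icc.2 (hq.1.trans hq.2)))]
  linarith

noncomputable def backwardSolution (a k : ℝ → ℝ) (A T t : ℝ) : ℝ :=
  exp (-∫ r in 0..t, a r) *
    (A * exp (∫ r in 0..T, a r) + ∫ s in t..T, k s * exp (∫ r in 0..s, a r))

section

variable {a k : ℝ → ℝ} {A T : ℝ}

theorem backwardSolution_self : backwardSolution a k A T T = A := by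
  rw [backwardSolution, integral_same, add_zero, mul_left_comm, ← exp_add, neg_add_cancel,
    exp_zero, mul_one]

theorem backwardSolution_nonneg {t : ℝ} (hA : 0 ≤ A) (htT : t ≤ T)
    (hk : ∀ s ∈ Icc t T, 0 ≤ k s) : 0 ≤ backwardSolution a k A T t :=
  mul_nonneg (exp_pos _).le <| add_nonneg (mul_nonneg hA (exp_pos _).le) <|
    integral_nonneg htT fun s hs => mul_nonneg (hk s hs) (exp_pos _).le

theorem absolutelyContinuousOnInterval_backwardSolution (ha : IntervalIntegrable a volume 0 T)
    (hk : IntervalIntegrable k volume 0 T) :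
    AbsolutelyContinuousOnInterval (backwardSolution a k A T) 0 T := by
  have hF := ha.absolutelyContinuousOnInterval_intervalIntegral (c := 0) left_mem_uIcc
  have hkE := hk.mul_continuousOn hF.rexp.continuousOn
  have hG : AbsolutelyContinuousOnInterval
      (fun t => ∫ s in t..T, k s * exp (∫ r in 0..s, a r)) 0 T := by
    simp_rw [integral_symm T]
    exact (hkE.absolutelyContinuousOnInterval_intervalIntegral right_mem_uIcc).fun_neg
  have hc : AbsolutelyContinuousOnInterval (fun _ => A * exp (∫ r in 0..T, a r)) 0 T :=
    (LipschitzWith.const _).lipschitzOnWith.absolutelyContinuousOnInterval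
  exact hF.fun_neg.rexp.fun_mul (hc.fun_add hG)

theorem ae_hasDerivAt_backwardSolution (ha : IntervalIntegrable a volume 0 T)
    (hk : IntervalIntegrable k volume 0 T) :
    ∀ᵐ s, s ∈ uIcc 0 T →
      HasDerivAt (backwardSolution a k A T) (-(k s + a s * backwardSolution a k A T s)) s := by
  have hkE := hk.mul_continuousOn
    (ha.absolutelyContinuousOnInterval_intervalIntegral (c := 0) left_mem_uIcc).rexp.continuousOn
  filter_upwards [ha.ae_hasDerivAt_integral, hkE.ae_hasDerivAt_integral] with s hFs hGs hs
  have hF := hFs hs 0 left_mem_uIcc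
  have hG : HasDerivAt (fun t => ∫ r in t..T, k r * exp (∫ u in 0..r, a u))
      (-(k s * exp (∫ u in 0..s, a u))) s := by
    simp_rw [integral_symm T]
    exact (hGs hs T right_mem_uIcc).neg
  refine (hF.neg.exp.mul (hG.const_add (A * exp (∫ r in 0..T, a r)))).congr_deriv ?_
  rw [backwardSolution, Pi.neg_apply, exp_neg]
  field_simp
  ring

theorem backwardSolution_eq_add_integral (ha : IntervalIntegrable a volume 0 T)
    (hk : IntervalIntegrable k volume 0 T) {t : ℝ} (ht : t ∈ uIcc 0 T) :
    backwardSolution a k A T t = A + ∫ s in t..T, (k s + a s * backwardSolution a k A T s) := by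
  have hsub : uIcc t T ⊆ uIcc 0 T := uIcc_subset_uIcc ht right_mem_uIcc
  have hFTC := ((absolutelyContinuousOnInterval_backwardSolution (A := A) ha hk).mono
    hsub).integral_deriv_eq_sub
  have hderiv : ∫ s in t..T, deriv (backwardSolution a k A T) s
      = -∫ s in t..T, (k s + a s * backwardSolution a k A T s) := by
    rw [← intervalIntegral.integral_neg]
    refine integral_congr_ae ?_
    filter_upwards [ae_hasDerivAt_backwardSolution ha hk] with s hs hsI
    exact (hs (hsub (uIoc_subset_uIcc hsI))).deriv
  rw [backwardSolution_self] at hFTC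
  linarith

theorem add_integral_eq_backwardSolution (ha : IntervalIntegrable a volume 0 T) {t : ℝ}
    (ht : t ∈ uIcc 0 T) :
    A * exp (∫ s in t..T, a s) + ∫ s in t..T, k s * exp (∫ r in t..s, a r)
      = backwardSolution a k A T t := by
  have hF : ∀ s ∈ uIcc 0 T, ∫ r in t..s, a r = (∫ r in 0..s, a r) - ∫ r in 0..t, a r :=
    fun s hs => (integral_interval_sub_left
      (ha.mono_set (uIcc_subset_uIcc left_mem_uIcc hs))
      (ha.mono_set (uIcc_subset_uIcc left_mem_uIcc ht))).symm
  have hkE : ∀ s ∈ uIcc t T, k s * exp (∫ r in t..s, a r)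
      = exp (-∫ r in 0..t, a r) * (k s * exp (∫ r in 0..s, a r)) := fun s hs => by
    rw [hF s (uIcc_subset_uIcc ht right_mem_uIcc hs), exp_sub, exp_neg]
    ring
  rw [integral_congr hkE, intervalIntegral.integral_const_mul, hF T right_mem_uIcc, exp_sub,
    backwardSolution, exp_neg]
  ring

end

/-- Properties of the explicit solution
`ȳ(t) = A·exp(∫_t^T a) + ∫_t^T k(s)·exp(∫_t^s a) ds` of the deterministic
backward comparison equation `ȳ(t) = A + ∫_t^T (k(s) + a(s)|ȳ(s)|) ds`. -/
theorem comparison_ode_solution_properties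
    (T : ℝ) (hT : 0 < T)
    (a k : ℝ → ℝ)
    (ha_int : IntegrableOn a (Set.Icc 0 T))
    (hk_int : IntegrableOn k (Set.Icc 0 T))
    (ha_nonneg : ∀ t ∈ Set.Icc (0 : ℝ) T, 0 ≤ a t)
    (hk_nonneg : ∀ t ∈ Set.Icc (0 : ℝ) T, 0 ≤ k t)
    (A : ℝ) (hA : 0 ≤ A)
    (ybar : ℝ → ℝ)
    (hybar : ∀ t : ℝ, ybar t =
      A * Real.exp (∫ s in t..T, a s) +
        ∫ s in t..T, k s * Real.exp (∫ r in t..s, a r)) :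
    ContinuousOn ybar (Set.Icc 0 T) ∧
    (∀ t ∈ Set.Icc (0 : ℝ) T, 0 ≤ ybar t) ∧
    ybar T = A ∧
    AntitoneOn ybar (Set.Icc 0 T) ∧
    (∀ t ∈ Set.Icc (0 : ℝ) T, ybar t ≤ ybar 0) ∧
    (∀ t ∈ Set.Icc (0 : ℝ) T,
      ybar t = A + ∫ s in t..T, (k s + a s * |ybar s|)) := by
  have hIcc : uIcc 0 T = Icc 0 T := uIcc_of_le hT.le
  have ha : IntervalIntegrable a volume 0 T :=
    (intervalIntegrable_iff_integrableOn_Icc_of_le hT.le).2 ha_int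
  have hk : IntervalIntegrable k volume 0 T :=
    (intervalIntegrable_iff_integrableOn_Icc_of_le hT.le).2 hk_int
  have hy : EqOn ybar (backwardSolution a k A T) (Icc 0 T) := fun t ht =>
    (hybar t).trans (add_integral_eq_backwardSolution ha (hIcc ▸ ht))
  have hy_nonneg : ∀ t ∈ Icc 0 T, 0 ≤ ybar t := fun t ht => hy ht ▸
    backwardSolution_nonneg hA ht.2 fun s hs => hk_nonneg s ⟨ht.1.trans hs.1, hs.2⟩
  have hcont : ContinuousOn ybar (Icc 0 T) :=
    (hIcc ▸ (absolutelyContinuousOnInterval_backwardSolution ha hk).continuousOn).congr hy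
  have hybar_eq : ∀ t ∈ Icc 0 T, ybar t = A + ∫ s in t..T, (k s + a s * |ybar s|) := by
    intro t ht
    rw [hy ht, backwardSolution_eq_add_integral ha hk (hIcc ▸ ht)]
    refine congrArg (A + ·) (integral_congr fun s hs => ?_)
    have hs' : s ∈ Icc 0 T := hIcc ▸ uIcc_subset_uIcc (hIcc ▸ ht) right_mem_uIcc hs
    rw [← hy hs', abs_of_nonneg (hy_nonneg s hs')]
  have hanti : AntitoneOn ybar (Icc 0 T) :=
    antitoneOn_of_eq_add_integral (hk.add (ha.mul_continuousOn (hIcc ▸ hcont.abs)))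
      (fun s hs => add_nonneg (hk_nonneg s hs) (mul_nonneg (ha_nonneg s hs) (abs_nonneg _)))
      hybar_eq
  exact ⟨hcont, hy_nonneg, by simp [hybar], hanti,
    fun t ht => hanti (left_mem_Icc.2 hT.le) ht ht.1, hybar_eq⟩
end

section
/- Let F : ℝ → ℝ and g : ℝ → ℝ be differentiable functions such that F'(v)·g'(w) ≥ −1 for all v, w ∈ ℝ. Let 𝐮, 𝐮' : ℝ → ℝ be ν-measurable functions with 𝐮(x) ≤ 𝐮'(x) for ν-a.e. x, such that x ↦ g(𝐮(x))·κ(x) and x ↦ g(𝐮'(x))·κ(x) are ν-integrable and 𝐮' − 𝐮 is ν-integrable. Then F( ∫ g(𝐮(x)) κ(x) ν(dx) ) − F( ∫ g(𝐮'(x)) κ(x) ν(dx) ) ≤ ∫ ( 𝐮'(x) − 𝐮(x) ) ν(dx). -/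
open MeasureTheory

lemma mvt_aux (f : ℝ → ℝ) (hf : Differentiable ℝ f) (a b : ℝ) :
    ∃ ξ : ℝ, f b - f a = deriv f ξ * (b - a) := by
  rcases lt_trichotomy a b with h | h | h
  · obtain ⟨ξ, _, hξ⟩ := exists_deriv_eq_slope f h hf.continuous.continuousOn
      (fun x _ => (hf x).differentiableWithinAt)
    refine ⟨ξ, ?_⟩
    rw [hξ, div_mul_cancel₀ _ (sub_ne_zero.2 h.ne')]
  · exact ⟨0, by simp [h]⟩
  · obtain ⟨ξ, _, hξ⟩ := exists_deriv_eq_slope f h hf.continuous.continuousOn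
      (fun x _ => (hf x).differentiableWithinAt)
    refine ⟨ξ, ?_⟩
    rw [hξ, div_mul_eq_mul_div, eq_div_iff (sub_ne_zero.2 h.ne')]
    ring

/-- If `F'(v)·g'(w) ≥ −1` for all `v, w` then, for `𝐮 ≤ 𝐮'` ν-a.e.,
`F(∫ g(𝐮(x)) κ(x) ν(dx)) − F(∫ g(𝐮'(x)) κ(x) ν(dx)) ≤ ∫ (𝐮'(x) − 𝐮(x)) ν(dx)`,
with `κ(x) = min 1 |x|`: condition (A8) implies condition (Aγ). -/
theorem product_condition_implies_Agamma
    (ν : Measure ℝ) (hν0 : ν {0} = 0)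
    (F g : ℝ → ℝ) (hF : Differentiable ℝ F) (hg : Differentiable ℝ g)
    (hprod : ∀ v w : ℝ, -1 ≤ deriv F v * deriv g w)
    (u u' : ℝ → ℝ) (hu : AEMeasurable u ν) (hu' : AEMeasurable u' ν)
    (hle : ∀ᵐ x ∂ν, u x ≤ u' x)
    (hint : Integrable (fun x => g (u x) * min 1 |x|) ν)
    (hint' : Integrable (fun x => g (u' x) * min 1 |x|) ν)
    (hdiff : Integrable (fun x => u' x - u x) ν) :
    F (∫ x, g (u x) * min 1 |x| ∂ν) - F (∫ x, g (u' x) * min 1 |x| ∂ν) ≤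
      ∫ x, (u' x - u x) ∂ν := by
  set A := ∫ x, g (u x) * min 1 |x| ∂ν with hA
  set B := ∫ x, g (u' x) * min 1 |x| ∂ν with hB
  obtain ⟨ξ, hξ⟩ := mvt_aux F hF B A
  set c := deriv F ξ with hc
  have hAB : A - B = ∫ x, (g (u x) * min 1 |x| - g (u' x) * min 1 |x|) ∂ν :=
    (integral_sub hint hint').symm
  have hintsub : Integrable
      (fun x => c * (g (u x) * min 1 |x| - g (u' x) * min 1 |x|)) ν :=
    (hint.sub hint').const_mul c
  have key : F A - F B = ∫ x, c * (g (u x) * min 1 |x| - g (u' x) * min 1 |x|) ∂ν := by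
    rw [hξ, hAB, integral_const_mul]
  rw [key]
  apply integral_mono_ae hintsub hdiff
  filter_upwards [hle] with x hx
  show c * (g (u x) * min 1 |x| - g (u' x) * min 1 |x|) ≤ u' x - u x
  obtain ⟨η, hη⟩ := mvt_aux g hg (u x) (u' x)
  have h1 : -1 ≤ c * deriv g η := hprod ξ η
  have hk0 : (0:ℝ) ≤ min 1 |x| := le_min zero_le_one (abs_nonneg x)
  have hk1 : min 1 |x| ≤ 1 := min_le_left _ _
  have hd : 0 ≤ u' x - u x := sub_nonneg.2 hx
  have hEq : c * (g (u x) * min 1 |x| - g (u' x) * min 1 |x|)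
      = -(c * deriv g η) * ((u' x - u x) * min 1 |x|) := by
    have hgs : g (u x) - g (u' x) = -(deriv g η * (u' x - u x)) := by linarith
    rw [show g (u x) * min 1 |x| - g (u' x) * min 1 |x|
        = (g (u x) - g (u' x)) * min 1 |x| by ring, hgs]
    ring
  rw [hEq]
  calc -(c * deriv g η) * ((u' x - u x) * min 1 |x|)
      ≤ 1 * ((u' x - u x) * min 1 |x|) :=
        mul_le_mul_of_nonneg_right (by linarith) (mul_nonneg hd hk0)
    _ = (u' x - u x) * min 1 |x| := one_mul _
    _ ≤ u' x - u x := mul_le_of_le_one_right hd hk1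
end

section
/- Let ν be a measure on the Borel sets of ℝ, let ℋ : ℝ → ℝ be differentiable with |ℋ'(v)| ≤ c·|v| for all |v| ≤ R' (for some constants c, R' > 0), let A¹, A² ∈ L²(ν) be nonnegative, and let 𝐮¹, 𝐮² : ℝ → ℝ be ν-measurable with |𝐮ⁱ(x)| ≤ min(Aⁱ(x), R') for ν-a.e. x (i = 1,2) and 𝐮¹ − 𝐮² ∈ L²(ν). Then ∫ |ℋ(𝐮¹(x)) − ℋ(𝐮²(x))| ν(dx) ≤ c·‖A¹ + A²‖_{L²(ν)}·‖𝐮¹ − 𝐮²‖_{L²(ν)}. -/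
/-!
Both `u¹(x)` and `u²(x)` lie in `[-m, m]` with `m = max |u¹(x)| |u²(x)|`, and `m ≤ R'`,
`m ≤ A¹(x) + A²(x)`. The mean value theorem on `[-m, m]` thus gives pointwise
`|ℋ(u¹) - ℋ(u²)| ≤ c (A¹ + A²) |u¹ - u²|`, whose integral is bounded by Cauchy–Schwarz in `L²(ν)`.
-/

open MeasureTheory

theorem norm_sub_le_mul_max_abs_mul_abs_sub {E : Type*} [NormedAddCommGroup E]
    [NormedSpace ℝ E] {H : ℝ → E} (hH : Differentiable ℝ H) {c R : ℝ} (hc : 0 ≤ c)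
    (hderiv : ∀ v : ℝ, |v| ≤ R → ‖deriv H v‖ ≤ c * |v|) {a b : ℝ} (ha : |a| ≤ R)
    (hb : |b| ≤ R) :
    ‖H a - H b‖ ≤ c * max |a| |b| * |a - b| := by
  set m := max |a| |b|
  have mem_Icc {v : ℝ} (hv : |v| ≤ m) : v ∈ Set.Icc (-m) m := abs_le.mp hv
  refine Convex.norm_image_sub_le_of_norm_hasDerivWithin_le
    (fun v _ => (hH v).hasDerivAt.hasDerivWithinAt) (fun v hv => ?_) (convex_Icc _ _)
    (mem_Icc (le_max_right _ _)) (mem_Icc (le_max_left _ _))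
  have hvm : |v| ≤ m := abs_le.mpr hv
  calc ‖deriv H v‖ ≤ c * |v| := hderiv v (hvm.trans (max_le ha hb))
    _ ≤ c * m := by gcongr

theorem integral_mul_le_toReal_eLpNorm_mul_toReal_eLpNorm {α : Type*} [MeasurableSpace α]
    {μ : Measure α} {f g : α → ℝ} (hf : MemLp f 2 μ) (hg : MemLp g 2 μ) :
    ∫ x, f x * g x ∂μ ≤ (eLpNorm f 2 μ).toReal * (eLpNorm g 2 μ).toReal := by
  calc ∫ x, f x * g x ∂μ = inner ℝ (hf.toLp f) (hg.toLp g) := by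
        rw [L2.inner_def]
        refine integral_congr_ae ?_
        filter_upwards [hf.coeFn_toLp, hg.coeFn_toLp] with x hfx hgx
        simp [hfx, hgx, mul_comm]
    _ ≤ ‖hf.toLp f‖ * ‖hg.toLp g‖ := real_inner_le_norm _ _
    _ = (eLpNorm f 2 μ).toReal * (eLpNorm g 2 μ).toReal := by
        rw [Lp.norm_toLp, Lp.norm_toLp]

theorem H_integral_lipschitz_general
    (ν : Measure ℝ)
    (H : ℝ → ℝ) (hH : Differentiable ℝ H)
    (c R' : ℝ) (hc : 0 < c)
    (hderiv : ∀ v : ℝ, |v| ≤ R' → |deriv H v| ≤ c * |v|)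
    (A1 A2 : ℝ → ℝ) (hA1 : MemLp A1 2 ν) (hA2 : MemLp A2 2 ν)
    (u1 u2 : ℝ → ℝ)
    (hub1 : ∀ᵐ x ∂ν, |u1 x| ≤ min (A1 x) R')
    (hub2 : ∀ᵐ x ∂ν, |u2 x| ≤ min (A2 x) R')
    (hdiff : MemLp (fun x => u1 x - u2 x) 2 ν) :
    ∫ x, |H (u1 x) - H (u2 x)| ∂ν ≤
      c * (eLpNorm (fun x => A1 x + A2 x) 2 ν).toReal *
        (eLpNorm (fun x => u1 x - u2 x) 2 ν).toReal := by
  have hpointwise : ∀ᵐ x ∂ν, |H (u1 x) - H (u2 x)| ≤ c * ((A1 x + A2 x) * |u1 x - u2 x|) := by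
    filter_upwards [hub1, hub2] with x h1 h2
    obtain ⟨h1A, h1R⟩ := le_min_iff.mp h1
    obtain ⟨h2A, h2R⟩ := le_min_iff.mp h2
    have hmax : max |u1 x| |u2 x| ≤ A1 x + A2 x := by
      apply max_le <;> linarith [abs_nonneg (u1 x), abs_nonneg (u2 x)]
    calc |H (u1 x) - H (u2 x)| ≤ c * max |u1 x| |u2 x| * |u1 x - u2 x| :=
          norm_sub_le_mul_max_abs_mul_abs_sub hH hc.le hderiv h1R h2R
      _ ≤ c * (A1 x + A2 x) * |u1 x - u2 x| := by gcongr
      _ = c * ((A1 x + A2 x) * |u1 x - u2 x|) := mul_assoc _ _ _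
  have hA : MemLp (fun x => A1 x + A2 x) 2 ν := hA1.add hA2
  have habs : MemLp (fun x => |u1 x - u2 x|) 2 ν := hdiff.abs
  calc ∫ x, |H (u1 x) - H (u2 x)| ∂ν
      ≤ ∫ x, c * ((A1 x + A2 x) * |u1 x - u2 x|) ∂ν :=
        integral_mono_of_nonneg (ae_of_all _ fun _ => abs_nonneg _)
          ((hA.integrable_mul habs).const_mul c) hpointwise
    _ = c * ∫ x, (A1 x + A2 x) * |u1 x - u2 x| ∂ν := integral_const_mul c _
    _ ≤ c * ((eLpNorm (fun x => A1 x + A2 x) 2 ν).toReal *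
          (eLpNorm (fun x => |u1 x - u2 x|) 2 ν).toReal) := by
        gcongr
        exact integral_mul_le_toReal_eLpNorm_mul_toReal_eLpNorm hA habs
    _ = _ := by rw [← mul_assoc, ← eLpNorm_norm (fun x => u1 x - u2 x)]; rfl

/-- Key Lipschitz estimate for the integral term `∫ ℋ(𝐮(x)) ν(dx)`:
if `|𝐮ⁱ| ≤ min(Aⁱ, R')` ν-a.e. with nonnegative `Aⁱ ∈ L²(ν)` and
`𝐮¹ − 𝐮² ∈ L²(ν)`, then
`∫ |ℋ(𝐮¹) − ℋ(𝐮²)| dν ≤ c·‖A¹ + A²‖_{L²(ν)}·‖𝐮¹ − 𝐮²‖_{L²(ν)}`. -/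
theorem H_integral_lipschitz
    (ν : Measure ℝ)
    (H : ℝ → ℝ) (hH : Differentiable ℝ H)
    (c R' : ℝ) (hc : 0 < c) (hR' : 0 < R')
    (hderiv : ∀ v : ℝ, |v| ≤ R' → |deriv H v| ≤ c * |v|)
    (A1 A2 : ℝ → ℝ) (hA1 : MemLp A1 2 ν) (hA2 : MemLp A2 2 ν)
    (hA1_nonneg : ∀ᵐ x ∂ν, 0 ≤ A1 x) (hA2_nonneg : ∀ᵐ x ∂ν, 0 ≤ A2 x)
    (u1 u2 : ℝ → ℝ) (hu1 : AEMeasurable u1 ν) (hu2 : AEMeasurable u2 ν)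
    (hub1 : ∀ᵐ x ∂ν, |u1 x| ≤ min (A1 x) R')
    (hub2 : ∀ᵐ x ∂ν, |u2 x| ≤ min (A2 x) R')
    (hdiff : MemLp (fun x => u1 x - u2 x) 2 ν) :
    ∫ x, |H (u1 x) - H (u2 x)| ∂ν ≤
      c * (eLpNorm (fun x => A1 x + A2 x) 2 ν).toReal *
        (eLpNorm (fun x => u1 x - u2 x) 2 ν).toReal :=
  H_integral_lipschitz_general ν H hH c R' hc hderiv A1 A2 hA1 hA2 u1 u2 hub1 hub2 hdiff
end
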